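/- Let S be a distributive inverse semigroup. The operations P ↦ P^u = {A ∈ Idl(S) : A ∩ P ≠ ∅} and F ↦ F^d = {s ∈ S : s^↓ ∈ F} are mutually inverse order isomorphisms between the poset of prime filters on S and the poset of completely prime filters on Idl(S). -/
import Mathlib


class InvSemigroup (S : Type*) extends Mul S, Inv S where
  mul_assoc : ∀ a b c : S, a * b * c = a * (b * c)
  mul_inv_mul : ∀ a : S, a * a⁻¹ * a = a
  inv_mul_inv : ∀ a : S, a⁻¹ * a * a⁻¹ = a⁻¹
  idem_comm : ∀ e f : S, e * e = e → f * f = f → e * f = f * e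

/-- The natural partial order on an inverse semigroup: `a ≤ b` iff `a = b * (a⁻¹ * a)`. -/
def nle {S : Type*} [InvSemigroup S] (a b : S) : Prop := a = b * (a⁻¹ * a)

def IsIdem {S : Type*} [Mul S] (e : S) : Prop := e * e = e

/-- Two elements are compatible if `a⁻¹ * b` and `a * b⁻¹` are idempotents. -/
def Compat {S : Type*} [InvSemigroup S] (a b : S) : Prop :=
  IsIdem (a⁻¹ * b) ∧ IsIdem (a * b⁻¹)

def PairwiseCompat {S : Type*} [InvSemigroup S] (X : Set S) : Prop :=
  ∀ a ∈ X, ∀ b ∈ X, Compat a b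

/-- `s` is the join (least upper bound) of `X` with respect to the natural partial order. -/
def IsJoin {S : Type*} [InvSemigroup S] (X : Set S) (s : S) : Prop :=
  (∀ a ∈ X, nle a s) ∧ ∀ u : S, (∀ a ∈ X, nle a u) → nle s u

/-- A distributive inverse semigroup: finite (binary) compatible joins exist and
multiplication distributes over them. -/
class DistInvSemigroup (S : Type*) extends InvSemigroup S where
  join2 : ∀ a b : S, Compat a b → ∃ j : S, IsJoin {a, b} j
  distl : ∀ a b j c : S, IsJoin {a, b} j → IsJoin {c * a, c * b} (c * j)
  distr : ∀ a b j c : S, IsJoin {a, b} j → IsJoin {a * c, b * c} (j * c)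

def downSet {S : Type*} [InvSemigroup S] (a : S) : Set S := {x | nle x a}

def IsOrderIdeal {S : Type*} [InvSemigroup S] (A : Set S) : Prop :=
  ∀ a ∈ A, ∀ x : S, nle x a → x ∈ A

/-- A member of `Idl(S)`: a ∨-closed compatible order ideal. -/
def IsIdl {S : Type*} [DistInvSemigroup S] (A : Set S) : Prop :=
  IsOrderIdeal A ∧ PairwiseCompat A ∧
    ∀ a ∈ A, ∀ b ∈ A, ∀ j : S, IsJoin {a, b} j → j ∈ A

/-- A prime filter in a distributive inverse semigroup. -/
def IsPrimeFilterS {S : Type*} [DistInvSemigroup S] (F : Set S) : Prop :=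
  F.Nonempty ∧ (∀ a ∈ F, ∀ b : S, nle a b → b ∈ F) ∧
    (∀ a ∈ F, ∀ b ∈ F, ∃ c ∈ F, nle c a ∧ nle c b) ∧
    ∀ a b j : S, IsJoin {a, b} j → j ∈ F → a ∈ F ∨ b ∈ F

/-- `J` is the join of a family of elements of `Idl(S)` in the poset of
∨-closed compatible order ideals ordered by inclusion. -/
def IsIdlJoin {S : Type*} [DistInvSemigroup S] (𝒜 : Set (Set S)) (J : Set S) : Prop :=
  (∀ A ∈ 𝒜, A ⊆ J) ∧ ∀ K : Set S, IsIdl K → (∀ A ∈ 𝒜, A ⊆ K) → J ⊆ K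

/-- A completely prime filter on `Idl(S)` (ordered by inclusion). -/
def IsCPFilterIdl {S : Type*} [DistInvSemigroup S] (𝓕 : Set (Set S)) : Prop :=
  (∀ A ∈ 𝓕, IsIdl A) ∧ 𝓕.Nonempty ∧
    (∀ A ∈ 𝓕, ∀ B : Set S, IsIdl B → A ⊆ B → B ∈ 𝓕) ∧
    (∀ A ∈ 𝓕, ∀ B ∈ 𝓕, ∃ C ∈ 𝓕, C ⊆ A ∧ C ⊆ B) ∧
    ∀ (𝒜 : Set (Set S)) (J : Set S), (∀ A ∈ 𝒜, IsIdl A) → IsIdl J →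
      IsIdlJoin 𝒜 J → J ∈ 𝓕 → ∃ A ∈ 𝒜, A ∈ 𝓕

/-- `P^u = {A ∈ Idl(S) : A ∩ P ≠ ∅}`. -/
def Pu {S : Type*} [DistInvSemigroup S] (P : Set S) : Set (Set S) :=
  {A | IsIdl A ∧ (A ∩ P).Nonempty}

/-- `F^d = {s ∈ S : s^↓ ∈ F}`. -/
def Fd {S : Type*} [DistInvSemigroup S] (𝓕 : Set (Set S)) : Set S :=
  {s | downSet s ∈ 𝓕}

section Aux
variable {S : Type*} [InvSemigroup S]

local instance : Semigroup S := { mul_assoc := InvSemigroup.mul_assoc }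

lemma mii (a : S) : a * a⁻¹ * a = a := InvSemigroup.mul_inv_mul a
lemma imi (a : S) : a⁻¹ * a * a⁻¹ = a⁻¹ := InvSemigroup.inv_mul_inv a

lemma idem_ia (a : S) : IsIdem (a⁻¹ * a) := by
  show a⁻¹ * a * (a⁻¹ * a) = a⁻¹ * a
  rw [← mul_assoc, imi]

lemma idem_ai (a : S) : IsIdem (a * a⁻¹) := by
  show a * a⁻¹ * (a * a⁻¹) = a * a⁻¹
  rw [← mul_assoc, mii]

lemma icomm {e f : S} (he : IsIdem e) (hf : IsIdem f) : e * f = f * e :=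
  InvSemigroup.idem_comm e f he hf

lemma idem_mul {e f : S} (he : IsIdem e) (hf : IsIdem f) : IsIdem (e * f) := by
  show e * f * (e * f) = e * f
  rw [mul_assoc, ← mul_assoc f e, icomm hf he, mul_assoc, hf, ← mul_assoc, he]

lemma iuniq {a x y : S} (h1 : a * x * a = a) (h2 : x * a * x = x)
    (h3 : a * y * a = a) (h4 : y * a * y = y) : x = y := by
  have hxa : IsIdem (x * a) := by show x * a * (x * a) = x * a; rw [← mul_assoc, h2]
  have hya : IsIdem (y * a) := by show y * a * (y * a) = y * a; rw [← mul_assoc, h4]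
  have hax : IsIdem (a * x) := by show a * x * (a * x) = a * x; rw [← mul_assoc, h1]
  have hay : IsIdem (a * y) := by show a * y * (a * y) = a * y; rw [← mul_assoc, h3]
  have c1 : x = x * (a * y) := by
    calc x = x * (a * x) := by rw [← mul_assoc, h2]
    _ = x * ((a * y) * (a * x)) := by rw [← mul_assoc (a*y) a x, h3]
    _ = x * ((a * x) * (a * y)) := by rw [icomm hay hax]
    _ = x * (a * y) := by rw [← mul_assoc x (a*x) (a*y), ← mul_assoc x a x, h2]
  have c2 : y = x * (a * y) := by
    calc y = (y * a) * y := h4.symm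
    _ = ((y * a) * (x * a)) * y := by rw [← mul_assoc (y*a) x a, mul_assoc y a x, mul_assoc y (a*x) a, h1]
    _ = ((x * a) * (y * a)) * y := by rw [icomm hya hxa]
    _ = x * (a * y) := by rw [mul_assoc (x*a) (y*a) y, h4, mul_assoc]
  rw [c1, ← c2]

lemma iinv_inv (a : S) : a⁻¹⁻¹ = a :=
  iuniq (InvSemigroup.mul_inv_mul a⁻¹) (InvSemigroup.inv_mul_inv a⁻¹) (imi a) (mii a)

lemma iidem_inv {e : S} (he : IsIdem e) : e⁻¹ = e :=
  iuniq (mii e) (imi e) (by rw [he, he]) (by rw [he, he])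

lemma imul_inv_rev (a b : S) : (a * b)⁻¹ = b⁻¹ * a⁻¹ := by
  refine iuniq (mii (a*b)) (imi (a*b)) ?_ ?_
  · -- (a*b) * (b⁻¹*a⁻¹) * (a*b) = a*b
    calc a * b * (b⁻¹ * a⁻¹) * (a * b)
        = a * ((b * b⁻¹) * (a⁻¹ * a)) * b := by simp only [mul_assoc]
    _ = a * ((a⁻¹ * a) * (b * b⁻¹)) * b := by rw [icomm (idem_ai b) (idem_ia a)]
    _ = (a * a⁻¹ * a) * (b * b⁻¹ * b) := by simp only [mul_assoc]
    _ = a * b := by rw [mii, mii]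
  · calc b⁻¹ * a⁻¹ * (a * b) * (b⁻¹ * a⁻¹)
        = b⁻¹ * ((a⁻¹ * a) * (b * b⁻¹)) * a⁻¹ := by simp only [mul_assoc]
    _ = b⁻¹ * ((b * b⁻¹) * (a⁻¹ * a)) * a⁻¹ := by rw [icomm (idem_ia a) (idem_ai b)]
    _ = (b⁻¹ * b * b⁻¹) * (a⁻¹ * a * a⁻¹) := by simp only [mul_assoc]
    _ = b⁻¹ * a⁻¹ := by rw [imi, imi]

end Aux
section Aux2
variable {S : Type*} [InvSemigroup S]

local instance : Semigroup S := { mul_assoc := InvSemigroup.mul_assoc }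

lemma nle_refl (a : S) : nle a a := by
  show a = a * (a⁻¹ * a); rw [← mul_assoc, mii]

lemma nle_inv_mul {x y : S} (h : nle x y) : (y⁻¹ * y) * (x⁻¹ * x) = x⁻¹ * x := by
  have key : ∀ e : S, IsIdem e → x = y * e → (y⁻¹ * y) * (x⁻¹ * x) = x⁻¹ * x := by
    intro e he hxe
    have hmid : (e * y⁻¹) * (y * e) = (y⁻¹ * y) * e := by
      calc (e * y⁻¹) * (y * e) = (e * (y⁻¹ * y)) * e := by simp only [mul_assoc]
      _ = ((y⁻¹ * y) * e) * e := by rw [icomm he (idem_ia y)]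
      _ = (y⁻¹ * y) * e := by rw [mul_assoc, he]
    rw [hxe, imul_inv_rev, iidem_inv he, hmid, ← mul_assoc, idem_ia y]
  exact key (x⁻¹ * x) (idem_ia x) h

lemma nle_trans {x y z : S} (hxy : nle x y) (hyz : nle y z) : nle x z := by
  show x = z * (x⁻¹ * x)
  calc x = y * (x⁻¹ * x) := hxy
  _ = z * (y⁻¹ * y) * (x⁻¹ * x) := by rw [← hyz]
  _ = z * ((y⁻¹ * y) * (x⁻¹ * x)) := by rw [mul_assoc]
  _ = z * (x⁻¹ * x) := by rw [nle_inv_mul hxy]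

lemma conj_idem (a : S) {h : S} (hh : IsIdem h) : IsIdem (a * h * a⁻¹) := by
  show (a * h * a⁻¹) * (a * h * a⁻¹) = a * h * a⁻¹
  calc (a * h * a⁻¹) * (a * h * a⁻¹)
      = a * (h * (a⁻¹ * a)) * (h * a⁻¹) := by simp only [mul_assoc]
  _ = a * ((a⁻¹ * a) * h) * (h * a⁻¹) := by rw [icomm hh (idem_ia a)]
  _ = (a * a⁻¹ * a) * (h * (h * a⁻¹)) := by simp only [mul_assoc]
  _ = a * h * a⁻¹ := by rw [mii, ← mul_assoc h h a⁻¹, hh, ← mul_assoc]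

lemma nle_inv_eq {x a : S} (hx : nle x a) : x⁻¹ = (x⁻¹ * x) * a⁻¹ := by
  conv_lhs => rw [hx]
  rw [imul_inv_rev, iidem_inv (idem_ia x)]

lemma compat_below {a x y : S} (hx : nle x a) (hy : nle y a) : Compat x y := by
  constructor
  · have h1 : x⁻¹ * y = (x⁻¹ * x) * a⁻¹ * (a * (y⁻¹ * y)) := by rw [← nle_inv_eq hx, ← hy]
    have h2 : (x⁻¹ * x) * a⁻¹ * (a * (y⁻¹ * y)) = (x⁻¹ * x) * ((a⁻¹ * a) * (y⁻¹ * y)) := by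
      simp only [mul_assoc]
    rw [h1, h2]
    exact idem_mul (idem_ia x) (idem_mul (idem_ia a) (idem_ia y))
  · have h1 : x * y⁻¹ = a * ((x⁻¹ * x) * (y⁻¹ * y)) * a⁻¹ := by
      have : a * ((x⁻¹ * x) * (y⁻¹ * y)) * a⁻¹ = (a * (x⁻¹ * x)) * ((y⁻¹ * y) * a⁻¹) := by
        simp only [mul_assoc]
      rw [this, ← hx, ← nle_inv_eq hy]
    rw [h1]
    exact conj_idem a (idem_mul (idem_ia x) (idem_ia y))

end Aux2
lemma downSet_isIdl {S : Type*} [DistInvSemigroup S] (a : S) : IsIdl (downSet a) := by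
  refine ⟨?_, ?_, ?_⟩
  · intro b hb x hx; exact nle_trans hx hb
  · intro x hx y hy; exact compat_below hx hy
  · intro x hx y hy j hj
    refine hj.2 a ?_
    rintro c (rfl | rfl)
    exacts [hx, hy]

inductive Gen {S : Type*} [InvSemigroup S] (𝒜 : Set (Set S)) : S → Prop
  | base {A : Set S} {a : S} : A ∈ 𝒜 → a ∈ A → Gen 𝒜 a
  | down {a x : S} : Gen 𝒜 a → nle x a → Gen 𝒜 x
  | join {a b j : S} : Gen 𝒜 a → Gen 𝒜 b → IsJoin {a, b} j → Gen 𝒜 j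

lemma idlJoin_gen {S : Type*} [DistInvSemigroup S] {𝒜 : Set (Set S)} {J : Set S}
    (hJ : IsIdl J) (hjoin : IsIdlJoin 𝒜 J) : ∀ j ∈ J, Gen 𝒜 j := by
  have hK : IsIdl {x | x ∈ J ∧ Gen 𝒜 x} := by
    refine ⟨?_, ?_, ?_⟩
    · rintro b ⟨hbJ, hbg⟩ x hx; exact ⟨hJ.1 b hbJ x hx, Gen.down hbg hx⟩
    · rintro x ⟨hxJ, _⟩ y ⟨hyJ, _⟩; exact hJ.2.1 x hxJ y hyJ
    · rintro x ⟨hxJ, hxg⟩ y ⟨hyJ, hyg⟩ j hj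
      exact ⟨hJ.2.2 x hxJ y hyJ j hj, Gen.join hxg hyg hj⟩
  intro j hj
  exact (hjoin.2 _ hK (fun A hA a ha => ⟨hjoin.1 A hA ha, Gen.base hA ha⟩) hj).2

lemma gen_prime {S : Type*} [DistInvSemigroup S] {P : Set S} (hP : IsPrimeFilterS P)
    {𝒜 : Set (Set S)} : ∀ x : S, Gen 𝒜 x → x ∈ P → ∃ A ∈ 𝒜, (A ∩ P).Nonempty := by
  intro x hx
  induction hx with
  | @base A a hA ha => exact fun hxP => ⟨A, hA, a, ha, hxP⟩
  | down hg hle ih => exact fun hxP => ih (hP.2.1 _ hxP _ hle)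
  | join hga hgb hj iha ihb =>
    intro hjP
    rcases hP.2.2.2 _ _ _ hj hjP with h | h
    exacts [iha h, ihb h]

lemma cp_key {S : Type*} [DistInvSemigroup S] {𝓕 : Set (Set S)} (h : IsCPFilterIdl 𝓕)
    {A : Set S} (hA : A ∈ 𝓕) : ∃ a ∈ A, downSet a ∈ 𝓕 := by
  obtain ⟨B, hBmem, hBF⟩ := h.2.2.2.2 {B | ∃ a ∈ A, B = downSet a} A
    (by rintro B ⟨a, ha, rfl⟩; exact downSet_isIdl a) (h.1 A hA)
    ⟨by rintro B ⟨a, ha, rfl⟩ x hx; exact (h.1 A hA).1 a ha x hx,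
     fun K hK hKall a ha => hKall (downSet a) ⟨a, ha, rfl⟩ (nle_refl a)⟩ hA
  rcases hBmem with ⟨a, ha, rfl⟩
  exact ⟨a, ha, hBF⟩

/-- `P` prime filter implies `P^u` is a completely prime filter on `Idl(S)`. -/
lemma pu_cp {S : Type*} [DistInvSemigroup S] {P : Set S} (hP : IsPrimeFilterS P) :
    IsCPFilterIdl (Pu P) := by
  refine ⟨fun A hA => hA.1, ?_, ?_, ?_, ?_⟩
  · obtain ⟨p, hp⟩ := hP.1
    exact ⟨downSet p, downSet_isIdl p, p, nle_refl p, hp⟩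
  · rintro A ⟨_, x, hxA, hxP⟩ B hB hAB
    exact ⟨hB, x, hAB hxA, hxP⟩
  · rintro A ⟨hAI, a, haA, haP⟩ B ⟨hBI, b, hbB, hbP⟩
    obtain ⟨c, hcP, hca, hcb⟩ := hP.2.2.1 a haP b hbP
    exact ⟨downSet c, ⟨downSet_isIdl c, c, nle_refl c, hcP⟩,
      fun x hx => hAI.1 a haA x (nle_trans hx hca),
      fun x hx => hBI.1 b hbB x (nle_trans hx hcb)⟩
  · rintro 𝒜 J h𝒜 hJ hjoin ⟨_, j, hjJ, hjP⟩
    obtain ⟨A, hA, hne⟩ := gen_prime hP j (idlJoin_gen hJ hjoin j hjJ) hjP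
    exact ⟨A, hA, h𝒜 A hA, hne⟩

/-- `𝓕` completely prime filter implies `𝓕^d` is a prime filter on `S`. -/
lemma fd_prime {S : Type*} [DistInvSemigroup S] {𝓕 : Set (Set S)} (h𝓕 : IsCPFilterIdl 𝓕) :
    IsPrimeFilterS (Fd 𝓕) := by
  obtain ⟨hIdl, ⟨A0, hA0⟩, hup, hdir, hcp⟩ := h𝓕
  have h𝓕' : IsCPFilterIdl 𝓕 := ⟨hIdl, ⟨A0, hA0⟩, hup, hdir, hcp⟩
  refine ⟨?_, ?_, ?_, ?_⟩
  · obtain ⟨a, _, ha⟩ := cp_key h𝓕' hA0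
    exact ⟨a, ha⟩
  · intro a ha b hab
    exact hup _ ha _ (downSet_isIdl b) (fun x hx => nle_trans hx hab)
  · intro a ha b hb
    obtain ⟨C, hC, hCa, hCb⟩ := hdir _ ha _ hb
    obtain ⟨c, hcC, hc⟩ := cp_key h𝓕' hC
    exact ⟨c, hc, hCa hcC, hCb hcC⟩
  · intro a b j hj hjF
    have hjoin : IsIdlJoin {downSet a, downSet b} (downSet j) := by
      constructor
      · rintro B (rfl | rfl) x hx
        · exact nle_trans hx (hj.1 a (Set.mem_insert a {b}))
        · exact nle_trans hx (hj.1 b (Set.mem_insert_of_mem a rfl))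
      · intro K hK hKall
        have haK : a ∈ K := hKall (downSet a) (Set.mem_insert _ _) (nle_refl a)
        have hbK : b ∈ K := hKall (downSet b) (Set.mem_insert_of_mem _ rfl) (nle_refl b)
        have hjK : j ∈ K := hK.2.2 a haK b hbK j hj
        exact fun x hx => hK.1 j hjK x hx
    obtain ⟨B, hB, hBF⟩ := hcp {downSet a, downSet b} (downSet j)
      (by rintro B (rfl | rfl) <;> exact downSet_isIdl _) (downSet_isIdl j) hjoin hjF
    rcases hB with rfl | rfl
    exacts [Or.inl hBF, Or.inr hBF]

/-- The operations `P ↦ P^u` and `F ↦ F^d` are mutually inverse order isomorphisms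
between the poset of prime filters on `S` and the poset of completely prime filters
on `Idl(S)`. -/
theorem stmt11 {S : Type*} [DistInvSemigroup S] :
    (∀ P : Set S, IsPrimeFilterS P → IsCPFilterIdl (Pu P)) ∧
    (∀ 𝓕 : Set (Set S), IsCPFilterIdl 𝓕 → IsPrimeFilterS (Fd 𝓕)) ∧
    (∀ P : Set S, IsPrimeFilterS P → Fd (Pu P) = P) ∧
    (∀ 𝓕 : Set (Set S), IsCPFilterIdl 𝓕 → Pu (Fd 𝓕) = 𝓕) ∧
    (∀ P Q : Set S, IsPrimeFilterS P → IsPrimeFilterS Q →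
      (P ⊆ Q ↔ Pu P ⊆ Pu Q)) := by
  refine ⟨fun P hP => pu_cp hP, fun 𝓕 h𝓕 => fd_prime h𝓕, ?_, ?_, ?_⟩
  · intro P hP
    ext s
    constructor
    · rintro ⟨_, x, hxs, hxP⟩
      exact hP.2.1 x hxP s hxs
    · intro hs
      exact ⟨downSet_isIdl s, s, nle_refl s, hs⟩
  · intro 𝓕 h𝓕
    ext A
    constructor
    · rintro ⟨hAI, a, haA, ha⟩
      exact h𝓕.2.2.1 _ ha A hAI (fun x hx => hAI.1 a haA x hx)
    · intro hA
      obtain ⟨a, haA, ha⟩ := cp_key h𝓕 hA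
      exact ⟨h𝓕.1 A hA, a, haA, ha⟩
  · intro P Q hP hQ
    constructor
    · rintro hPQ A ⟨hAI, x, hxA, hxP⟩
      exact ⟨hAI, x, hxA, hPQ hxP⟩
    · intro h s hs
      obtain ⟨_, x, hxs, hxQ⟩ := h ⟨downSet_isIdl s, s, nle_refl s, hs⟩
      exact hQ.2.1 x hxQ s hxs
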